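/- arXiv:0711.1348 — 5 statements merged into one kernel-verified Lean document; each statement's English description precedes it below -/
import Mathlib

section
/- Let {x_{i_r}, x_{i_s}} (with r < s) be a deletion pair in a 0-Hecke word, i.e. the word x_{i_r}⋯x_{i_s} is not reduced but both x_{i_{r+1}}⋯x_{i_s} and x_{i_r}⋯x_{i_{s-1}} are reduced. Then the Demazure products satisfy w(x_{i_r}⋯x_{i_s}) = w(x_{i_{r+1}}⋯x_{i_s}) = w(x_{i_r}⋯x_{i_{s-1}}), and these are all distinct from w(x_{i_{r+1}}⋯x_{i_{s-1}}) (the word with both endpoints deleted). -/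
variable {B W : Type*} [Group W] {M : CoxeterMatrix B}

/-- The Demazure (0-Hecke) product of a word in the simple reflections. -/
noncomputable def demazureProd (cs : CoxeterSystem M W) (ω : List B) : W :=
  ω.foldl (fun w i =>
    if cs.length (w * cs.simple i) = cs.length w + 1 then w * cs.simple i else w) 1

/-
Write `ω = i σ j` and `u = π σ`. Reducedness of `iσ` and `σj` says that `s_i` is not a left
descent and `s_j` not a right descent of `u`, and non-reducedness of `ω` says that `s_j` is a right
descent of `s_i u`. By the exchange property, `s_i u s_j` is obtained from the reduced word `iσ` by
deleting a letter; deleting a letter of `σ` would make `u s_j` shorter than `u`, so the deleted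
letter is `i` and `s_i u = u s_j`. All words but `ω` are reduced, so their Demazure products are
their ordinary products, while the Demazure product of `ω` skips its last letter.

The exchange property comes from the reflection cocycle: the assignment
`s_i ↦ ((t, e) ↦ (s_i t s_i, e + [t = s_i]))` on `W × ZMod 2` respects the Coxeter relations,
so the parity of the number of occurrences of `t` in the right inversion sequence of a word depends
only on the product of the word.
-/

theorem mul_mul_inv_eq_iff (g x y : W) : g * x * g⁻¹ = y ↔ x = g⁻¹ * y * g := by
  constructor <;> rintro rfl <;> group

namespace CoxeterSystem

variable (cs : CoxeterSystem M W)

local prefix:100 "s " => cs.simple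
local prefix:100 "π " => cs.wordProd
local prefix:100 "ris " => cs.rightInvSeq

section InversionParity

open Classical

theorem simple_mul_mul_simple_eq_simple_iff (i : B) (t : W) : s i * t * s i = s i ↔ t = s i := by
  constructor
  · intro h
    simpa [mul_assoc] using congrArg (fun x => s i * (x * s i)) h
  · rintro rfl
    simp

theorem inversionParity_involutive (i : B) :
    Function.Involutive fun p : W × ZMod 2 =>
      (s i * p.1 * s i, p.2 + if p.1 = s i then 1 else 0) := by
  rintro ⟨t, e⟩
  simp only [simple_mul_mul_simple_eq_simple_iff]
  simp only [mul_assoc, simple_mul_simple_cancel_left, simple_mul_simple_self, mul_one,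
    Prod.mk.injEq, true_and]
  split_ifs <;> simp [add_assoc, CharTwo.add_self_eq_zero]

noncomputable def inversionParityPerm (i : B) : Equiv.Perm (W × ZMod 2) :=
  (cs.inversionParity_involutive i).toPerm

@[simp]
theorem inversionParityPerm_apply (i : B) (t : W) (e : ZMod 2) :
    cs.inversionParityPerm i (t, e) = (s i * t * s i, e + if t = s i then 1 else 0) :=
  rfl

theorem inversionParityPerm_mul_pow_apply (i j : B) (k : ℕ) (t : W) (e : ZMod 2) :
    ((cs.inversionParityPerm i * cs.inversionParityPerm j) ^ k) (t, e) =
      ((s i * s j) ^ k * t * ((s i * s j) ^ k)⁻¹,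
        e + ∑ l ∈ Finset.range (2 * k), if t = s j * (s i * s j) ^ l then 1 else 0) := by
  set P := s i * s j
  have hconj (n : ℕ) : (P ^ n)⁻¹ * s j = s j * P ^ n := by
    have hP : P⁻¹ = s j * s i := by simp [P]
    rw [← inv_pow, hP]
    exact (SemiconjBy.pow_right (mul_assoc _ _ _).symm n : SemiconjBy (s j) (P ^ n) _).symm
  induction k with
  | zero => simp
  | succ k ih =>
    have h₁ : P ^ k * t * (P ^ k)⁻¹ = s j ↔ t = s j * P ^ (2 * k) := by
      rw [mul_mul_inv_eq_iff, hconj, mul_assoc, ← pow_add, two_mul]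
    have h₂ : s j * (P ^ k * t * (P ^ k)⁻¹) * s j = s i ↔ t = s j * P ^ (2 * k + 1) := by
      have hs := mul_mul_inv_eq_iff (s j) (P ^ k * t * (P ^ k)⁻¹) (s i)
      rw [inv_simple] at hs
      rw [hs, mul_mul_inv_eq_iff]
      rw [show (P ^ k)⁻¹ * (s j * s i * s j) * P ^ k = ((P ^ k)⁻¹ * s j) * P * P ^ k by
          simp [P, mul_assoc],
        hconj, mul_assoc, mul_assoc, ← pow_succ', ← pow_add, two_mul, add_assoc]
    rw [pow_succ', Equiv.Perm.mul_apply, Equiv.Perm.mul_apply, ih]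
    simp only [inversionParityPerm_apply, h₁, h₂, Prod.mk.injEq]
    constructor
    · simp [P, pow_succ', mul_assoc]
    · rw [show 2 * (k + 1) = 2 * k + 1 + 1 by ring, Finset.sum_range_succ, Finset.sum_range_succ]
      ring

theorem isLiftable_inversionParityPerm : M.IsLiftable cs.inversionParityPerm := by
  intro i j
  ext ⟨t, e⟩ : 1
  have hpow := cs.simple_mul_simple_pow i j
  have hsum : ∑ l ∈ Finset.range (2 * M i j),
      (if t = s j * (s i * s j) ^ l then (1 : ZMod 2) else 0) = 0 := by
    -- `l ↦ s j * (s i * s j) ^ l` has period `M i j`, so every term occurs twice.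
    rw [two_mul, Finset.sum_range_add]
    simp only [pow_add, hpow, one_mul]
    exact CharTwo.add_self_eq_zero _
  rw [inversionParityPerm_mul_pow_apply, hpow, hsum]
  simp

noncomputable def inversionParityRep : W →* Equiv.Perm (W × ZMod 2) :=
  cs.lift ⟨cs.inversionParityPerm, cs.isLiftable_inversionParityPerm⟩

theorem inversionParityRep_wordProd_apply (ω : List B) (t : W) (e : ZMod 2) :
    cs.inversionParityRep (π ω) (t, e) = (π ω * t * (π ω)⁻¹, e + (ris ω).count t) := by
  induction ω with
  | nil => simp
  | cons a ω ih =>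
    have ha : cs.inversionParityRep (s a) = cs.inversionParityPerm a :=
      cs.lift_apply_simple cs.isLiftable_inversionParityPerm a
    have hmem : π ω * t * (π ω)⁻¹ = s a ↔ (π ω)⁻¹ * s a * π ω = t := by
      rw [mul_mul_inv_eq_iff, eq_comm]
    rw [wordProd_cons, map_mul, Equiv.Perm.mul_apply, ih, ha, inversionParityPerm_apply, hmem]
    simp only [rightInvSeq, List.count_cons, beq_iff_eq, mul_inv_rev, inv_simple, mul_assoc,
      Prod.mk.injEq, true_and]
    split_ifs <;> push_cast <;> ring

theorem count_rightInvSeq_eq_of_wordProd_eq {ω ω' : List B} (h : π ω = π ω') (t : W) :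
    ((ris ω).count t : ZMod 2) = (ris ω').count t := by
  simpa [inversionParityRep_wordProd_apply] using
    congrArg (fun w => (cs.inversionParityRep w (t, 0)).2) h

end InversionParity

theorem mem_rightInvSeq_iff_of_wordProd_eq {ω ω' : List B} (hω : cs.IsReduced ω)
    (hω' : cs.IsReduced ω') (h : π ω = π ω') (t : W) : t ∈ ris ω ↔ t ∈ ris ω' := by
  classical
  have hcount := cs.count_rightInvSeq_eq_of_wordProd_eq h t
  rw [hω.nodup_rightInvSeq.count, hω'.nodup_rightInvSeq.count] at hcount
  split_ifs at hcount <;> simp_all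

theorem simple_mem_rightInvSeq_of_isRightDescent {ω : List B} (hω : cs.IsReduced ω) {i : B}
    (hi : cs.IsRightDescent (π ω) i) : s i ∈ ris ω := by
  obtain ⟨σ, hσ, hσω⟩ := cs.exists_isReduced (π ω * s i)
  have hprod : π (σ ++ [i]) = π ω := by
    rw [wordProd_append, wordProd_singleton, ← hσω, mul_assoc, simple_mul_simple_self, mul_one]
  have hred : cs.IsReduced (σ ++ [i]) := by
    rw [IsReduced, hprod, List.length_append, List.length_singleton, ← hσ.eq, ← hσω,
      cs.isRightDescent_iff.mp hi]
  rw [cs.mem_rightInvSeq_iff_of_wordProd_eq hω hred hprod.symm, ← List.concat_eq_append,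
    rightInvSeq_concat]
  simp

theorem exists_eraseIdx_of_isRightDescent {ω : List B} (hω : cs.IsReduced ω) {i : B}
    (hi : cs.IsRightDescent (π ω) i) : ∃ k < ω.length, π ω * s i = π (ω.eraseIdx k) := by
  obtain ⟨k, hk, hget⟩ :=
    List.getElem_of_mem (cs.simple_mem_rightInvSeq_of_isRightDescent hω hi)
  refine ⟨k, by simpa using hk, ?_⟩
  rw [← wordProd_mul_getD_rightInvSeq, List.getD_eq_getElem _ _ hk, hget]

theorem IsReduced.of_append_left {ω ω' : List B} (h : cs.IsReduced (ω ++ ω')) :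
    cs.IsReduced ω := by
  simpa using h.take ω.length

theorem IsReduced.not_isLeftDescent_of_cons {i : B} {ω : List B} (h : cs.IsReduced (i :: ω)) :
    ¬cs.IsLeftDescent (π ω) i := by
  have := cs.length_wordProd_le ω
  rw [IsReduced, wordProd_cons] at h
  simp only [IsLeftDescent, h, List.length_cons]
  omega

theorem IsReduced.isReduced_concat_iff {ω : List B} (hω : cs.IsReduced ω) {i : B} :
    cs.IsReduced (ω ++ [i]) ↔ ¬cs.IsRightDescent (π ω) i := by
  rw [IsReduced, wordProd_append, wordProd_singleton, List.length_append, List.length_singleton,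
    not_isRightDescent_iff, hω.eq]

theorem simple_mul_eq_mul_simple_of_isRightDescent {u : W} {i j : B}
    (hi : ¬cs.IsLeftDescent u i) (hj : ¬cs.IsRightDescent u j)
    (hij : cs.IsRightDescent (s i * u) j) : s i * u = u * s j := by
  obtain ⟨ρ, hρ, rfl⟩ := cs.exists_isReduced u
  have hiρ : cs.IsReduced (i :: ρ) := by
    rw [IsReduced, wordProd_cons, cs.not_isLeftDescent_iff.mp hi, hρ.eq, List.length_cons]
  rw [← wordProd_cons] at hij
  obtain ⟨k, -, hk⟩ := cs.exists_eraseIdx_of_isRightDescent hiρ hij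
  cases k with
  | zero =>
    rw [List.eraseIdx_cons_zero, wordProd_cons] at hk
    rw [← mul_inv_eq_iff_eq_mul, inv_simple, hk]
  | succ k =>
    rw [List.eraseIdx_cons_succ, wordProd_cons, wordProd_cons, mul_assoc, mul_right_inj] at hk
    have hle := cs.length_wordProd_le (ρ.eraseIdx k)
    rw [← hk, cs.not_isRightDescent_iff.mp hj, hρ.eq, List.length_eraseIdx] at hle
    split_ifs at hle <;> omega

end CoxeterSystem

open CoxeterSystem

section Demazure

variable (cs : CoxeterSystem M W)

theorem demazureProd_concat (ω : List B) (i : B) :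
    demazureProd cs (ω ++ [i]) =
      if cs.length (demazureProd cs ω * cs.simple i) = cs.length (demazureProd cs ω) + 1 then
        demazureProd cs ω * cs.simple i
      else demazureProd cs ω := by
  rw [demazureProd, List.foldl_append, List.foldl_cons, List.foldl_nil, ← demazureProd]

theorem demazureProd_concat_of_isRightDescent {ω : List B} {i : B}
    (h : cs.IsRightDescent (demazureProd cs ω) i) :
    demazureProd cs (ω ++ [i]) = demazureProd cs ω := by
  have := cs.isRightDescent_iff.mp h
  rw [demazureProd_concat, if_neg (by omega)]

theorem demazureProd_concat_of_not_isRightDescent {ω : List B} {i : B}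
    (h : ¬cs.IsRightDescent (demazureProd cs ω) i) :
    demazureProd cs (ω ++ [i]) = demazureProd cs ω * cs.simple i := by
  rw [demazureProd_concat, if_pos (cs.not_isRightDescent_iff.mp h)]

theorem demazureProd_of_isReduced {ω : List B} (h : cs.IsReduced ω) :
    demazureProd cs ω = cs.wordProd ω := by
  induction ω using List.reverseRecOn with
  | nil => rfl
  | append_singleton ρ i ih =>
    have hρ := h.of_append_left
    have hi : ¬cs.IsRightDescent (demazureProd cs ρ) i := by
      rw [ih hρ]
      exact hρ.isReduced_concat_iff.mp h
    rw [demazureProd_concat_of_not_isRightDescent cs hi, ih hρ, wordProd_append,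
      wordProd_singleton]

end Demazure

/-- If the first and last letters of a word `ω` form a deletion pair
(`ω` is not reduced, but deleting either the first or the last letter yields a reduced
word), then the Demazure products of `ω`, of `ω` minus its first letter, and of `ω` minus
its last letter all agree, and they differ from the Demazure product of `ω` with both
endpoints deleted. -/
theorem demazureProd_deletionPair (cs : CoxeterSystem M W) (ω : List B)
    (hlen : 2 ≤ ω.length)
    (hnred : ¬ cs.IsReduced ω)
    (htail : cs.IsReduced ω.tail)
    (hdrop : cs.IsReduced ω.dropLast) :
    demazureProd cs ω = demazureProd cs ω.tail ∧
    demazureProd cs ω = demazureProd cs ω.dropLast ∧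
    demazureProd cs ω ≠ demazureProd cs ω.tail.dropLast := by
  obtain ⟨i, τ, rfl⟩ := List.exists_cons_of_length_pos (by omega : 0 < ω.length)
  obtain ⟨σ, j, rfl⟩ := τ.eq_nil_or_concat'.resolve_left (by rintro rfl; simp at hlen)
  rw [List.tail_cons] at htail ⊢
  rw [← List.cons_append] at hnred hdrop ⊢
  simp only [List.dropLast_concat] at hdrop ⊢
  have hσ := htail.of_append_left
  have hdesc : cs.IsRightDescent (cs.wordProd (i :: σ)) j :=
    not_not.mp (mt hdrop.isReduced_concat_iff.mpr hnred)
  rw [demazureProd_concat_of_isRightDescent cs (by rwa [demazureProd_of_isReduced cs hdrop]),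
    demazureProd_of_isReduced cs htail, demazureProd_of_isReduced cs hdrop,
    demazureProd_of_isReduced cs hσ, wordProd_append, wordProd_singleton, wordProd_cons]
  rw [wordProd_cons] at hdesc
  refine ⟨cs.simple_mul_eq_mul_simple_of_isRightDescent hdrop.not_isLeftDescent_of_cons
    (hσ.isReduced_concat_iff.mp htail) hdesc, rfl, fun h => ?_⟩
  exact cs.length_simple_mul_ne _ i (congrArg cs.length h)
end

section
/- Suppose a word x_{i_1}⋯x_{i_d} in the 0-Hecke monoid of a Coxeter group has a deletion pair {x_{i_r}, x_{i_s}} and a deletion pair {x_{i_s}, x_{i_t}} for positions r < s < t. Then the word x_{i_r}⋯ x̂_{i_s} ⋯ x_{i_t} obtained by deleting the middle position s from the segment from r to t is not reduced. -/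
/-! Since `s_y² = 1`, the product of `x b c z` is the product of `x b y` and `y c z`, so its
length is at most the sum of their lengths. A non-reduced word is at least two letters longer
than its product, because lengths of words and of their products have the same parity; hence
`x b c z`, of length `|b| + |c| + 2`, has a product of length at most `|b| + |c|`. -/

namespace CoxeterSystem

variable {B W : Type*} [Group W] {M : CoxeterMatrix B} (cs : CoxeterSystem M W)

theorem length_wordProd_mod_two (ω : List B) :
    cs.length (cs.wordProd ω) % 2 = ω.length % 2 := by
  induction ω with
  | nil => simp
  | cons i ω ih =>
    rw [cs.wordProd_cons, cs.length_mul_mod_two, cs.length_simple, List.length_cons,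
      Nat.add_mod, ih, ← Nat.add_mod, Nat.add_comm]

variable {cs} in
theorem length_wordProd_add_two_le_of_not_isReduced {ω : List B} (h : ¬ cs.IsReduced ω) :
    cs.length (cs.wordProd ω) + 2 ≤ ω.length := by
  have hle := cs.length_wordProd_le ω
  have hpar := cs.length_wordProd_mod_two ω
  have hne : cs.length (cs.wordProd ω) ≠ ω.length := h
  omega

theorem wordProd_append_singleton_mul_wordProd_cons (ω ω' : List B) (i : B) :
    cs.wordProd (ω ++ [i]) * cs.wordProd (i :: ω') = cs.wordProd (ω ++ ω') := by
  rw [cs.wordProd_append, cs.wordProd_singleton, cs.wordProd_cons, mul_assoc,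
    cs.simple_mul_simple_cancel_left, cs.wordProd_append]

variable {cs} in
theorem not_isReduced_append_of_not_isReduced_append_singleton_of_not_isReduced_cons
    {ω ω' : List B} {i : B} (h : ¬ cs.IsReduced (ω ++ [i])) (h' : ¬ cs.IsReduced (i :: ω')) :
    ¬ cs.IsReduced (ω ++ ω') := by
  intro hred
  have hlen : cs.length (cs.wordProd (ω ++ ω')) ≤
      cs.length (cs.wordProd (ω ++ [i])) + cs.length (cs.wordProd (i :: ω')) := by
    rw [← cs.wordProd_append_singleton_mul_wordProd_cons]
    exact cs.length_mul_le _ _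
  have hle := length_wordProd_add_two_le_of_not_isReduced h
  have hle' := length_wordProd_add_two_le_of_not_isReduced h'
  rw [hred.eq] at hlen
  simp only [List.length_append, List.length_cons, List.length_nil] at hlen hle hle'
  omega

end CoxeterSystem

theorem concat_deletionPairs_not_reduced_general {B W : Type*} [Group W] {M : CoxeterMatrix B}
    (cs : CoxeterSystem M W) (x y z : B) (b c : List B)
    (h1 : ¬ cs.IsReduced (x :: (b ++ [y])))
    (h4 : ¬ cs.IsReduced (y :: (c ++ [z]))) :
    ¬ cs.IsReduced (x :: (b ++ c ++ [z])) := by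
  rw [List.append_assoc, ← List.cons_append]
  exact CoxeterSystem.not_isReduced_append_of_not_isReduced_append_singleton_of_not_isReduced_cons
    (ω := x :: b) h1 h4

/-- Suppose a word has consecutive segments `[x] ++ b ++ [y]` and
`[y] ++ c ++ [z]`, each of which is a deletion pair: the segment is not reduced, but
deleting either endpoint yields a reduced word.  Then the word `[x] ++ b ++ c ++ [z]`,
obtained from the segment from `x` to `z` by deleting the middle letter `y`, is not
reduced. -/
theorem concat_deletionPairs_not_reduced {B W : Type*} [Group W] {M : CoxeterMatrix B}
    (cs : CoxeterSystem M W) (x y z : B) (b c : List B)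
    (h1 : ¬ cs.IsReduced (x :: (b ++ [y])))
    (h2 : cs.IsReduced (b ++ [y]))
    (h3 : cs.IsReduced (x :: b))
    (h4 : ¬ cs.IsReduced (y :: (c ++ [z])))
    (h5 : cs.IsReduced (c ++ [z]))
    (h6 : cs.IsReduced (y :: c)) :
    ¬ cs.IsReduced (x :: (b ++ c ++ [z])) :=
  concat_deletionPairs_not_reduced_general cs x y z b c h1 h4
end

section
/- Let {x_{i_r}, x_{i_s}} (r < s) be a deletion pair in a word of a Coxeter group, meaning x_{i_r}⋯x_{i_s} is not reduced but both words obtained by deleting one endpoint are reduced. Then for any u with r < u < s, the word x_{i_r}⋯x̂_{i_u}⋯x_{i_s} obtained by deleting the interior letter x_{i_u} is not reduced. -/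
/-!
Tits' sign cocycle: the generators lift to `(W → ℤˣ) ⋊ W` via `s i ↦ (δ_{s i}, s i)`,
where `W` acts on `W → ℤˣ` through conjugation of the argument, and the lift of `π ω` is
`(t ↦ (-1) ^ #{occurrences of t in lis ω}, π ω)`. So these multiplicities mod 2 depend only on
`π ω`: a word whose left inversion sequence has no repetition is reduced, and two reduced words
for the same element have left inversion sequences that are permutations of each other.

Write the word as `a :: mid ++ [b]` and `w = π mid`. Its left inversion sequence is both
`lis (a :: mid) ++ [t]` and `s a :: (s a) (lis (mid ++ [b])) (s a)`, with `lis (a :: mid)` and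
`lis (mid ++ [b])` repetition free; as it has a repetition, `t = s a`, i.e. `s a * w * s b = w`.
Deleting the `j`-th letter of `mid` gives the product `(s a * q * s a) * w` with
`q = (lis mid)[j]`, and comparing the reduced words `a :: mid` and `mid ++ [b]` of
`s a * w = w * s b` puts `s a * q * s a` into `lis mid`. It is thus a left inversion of `w`,
so the product has length `< |mid|`.
-/

open List

theorem List.eq_of_cons_eq_append_singleton_of_not_nodup {α : Type*} {x y : α} {l l' : List α}
    (h : x :: l = l' ++ [y]) (hl : l.Nodup) (hl' : l'.Nodup) (hnd : ¬ (x :: l).Nodup) :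
    x = y := by
  rcases l' with _ | ⟨z, l'⟩
  · simp only [nil_append, cons.injEq] at h
    exact h.1
  obtain ⟨rfl, rfl⟩ := cons_eq_cons.mp h
  simp_all

namespace CoxeterSystem

variable {B W : Type*} [Group W]

abbrev conjArrow : W →* MulAut (W → ℤˣ) :=
  (mulAutArrow (G := ConjAct W)).comp (ConjAct.toConjAct (G := W)).toMonoidHom

theorem conjArrow_apply (a : W) (f : W → ℤˣ) (x : W) :
    conjArrow a f x = f (a⁻¹ * x * a) := by
  show f ((ConjAct.toConjAct a)⁻¹ • x) = _
  simp [ConjAct.smul_def]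

theorem prod_map_alternatingWord_two_mul {G : Type*} [Monoid G] (f : B → G) (i j : B) (p : ℕ) :
    ((alternatingWord i j (2 * p)).map f).prod = (f i * f j) ^ p := by
  induction p with
  | zero => simp [alternatingWord]
  | succ p ih =>
    rw [show alternatingWord i j (2 * (p + 1)) = alternatingWord i j (2 * p) ++ [i, j] by
      simp [alternatingWord, mul_add]]
    simp [ih, pow_succ]

variable {M : CoxeterMatrix B} (cs : CoxeterSystem M W)

local prefix:100 "s" => cs.simple
local prefix:100 "π" => cs.wordProd
local prefix:100 "ℓ" => cs.length
local prefix:100 "lis" => cs.leftInvSeq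

theorem leftInvSeq_alternatingWord_two_mul (i j : B) (p : ℕ) :
    lis (alternatingWord i j (2 * p)) =
      (range (2 * p)).map fun k ↦ π (alternatingWord j i (2 * k + 1)) :=
  List.ext_getElem (by simp) fun k hk _ ↦ by
    simpa using cs.getElem_leftInvSeq_alternatingWord i j p k (by simpa using hk)

section SignCocycle

variable [DecidableEq W]

theorem even_count_leftInvSeq_alternatingWord_two_mul (i j : B) (t : W) :
    Even ((lis (alternatingWord i j (2 * M i j))).count t) := by
  have hperiodic (k : ℕ) : π (alternatingWord j i (2 * (M i j + k) + 1)) =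
      π (alternatingWord j i (2 * k + 1)) := by
    simp only [prod_alternatingWord_eq_mul_pow, Nat.not_even_bit1, if_false,
      show ∀ n, (2 * n + 1) / 2 = n by omega, pow_add, simple_mul_simple_pow', one_mul]
  rw [leftInvSeq_alternatingWord_two_mul, two_mul, range_add, map_append, map_map]
  simp only [Function.comp_def, hperiodic, count_append]
  exact ⟨_, rfl⟩

def signedSimple (i : B) : (W → ℤˣ) ⋊[conjArrow] W := ⟨Pi.mulSingle (s i) (-1), s i⟩

theorem prod_map_signedSimple (ω : List B) :
    (ω.map cs.signedSimple).prod = ⟨fun t ↦ (-1) ^ (lis ω).count t, π ω⟩ := by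
  induction ω with
  | nil => rfl
  | cons i ω ih =>
    rw [map_cons, prod_cons, ih]
    ext t
    · have hcount : ((lis ω).map (MulAut.conj (s i))).count t =
          (lis ω).count ((s i)⁻¹ * t * s i) := by
        conv_lhs => rw [← MulEquiv.apply_symm_apply (MulAut.conj (s i)) t]
        rw [count_map_of_injective _ _ (MulAut.conj (s i)).injective, MulAut.conj_symm_apply]
      simp only [SemidirectProduct.mul_left, Pi.mul_apply, conjArrow_apply, leftInvSeq,
        count_cons, hcount, pow_add, signedSimple]
      by_cases ht : t = s i
      · simp [ht]
      · simp [ht, Ne.symm ht]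
    · simp [signedSimple, wordProd_cons]

theorem signedSimple_isLiftable : M.IsLiftable cs.signedSimple := by
  intro i j
  rw [← prod_map_alternatingWord_two_mul, prod_map_signedSimple]
  ext t
  · exact (cs.even_count_leftInvSeq_alternatingWord_two_mul i j t).neg_one_pow
  · simp [wordProd, prod_map_alternatingWord_two_mul, simple_mul_simple_pow]

def signHom : W →* (W → ℤˣ) ⋊[conjArrow] W :=
  cs.lift ⟨cs.signedSimple, cs.signedSimple_isLiftable⟩

theorem signHom_wordProd (ω : List B) :
    cs.signHom (π ω) = ⟨fun t ↦ (-1) ^ (lis ω).count t, π ω⟩ := by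
  rw [← prod_map_signedSimple, wordProd, map_list_prod, map_map]
  congr 1
  exact map_congr_left fun i _ ↦ cs.lift_apply_simple cs.signedSimple_isLiftable i

theorem count_leftInvSeq_mod_two_eq {ω ω' : List B} (h : π ω = π ω') (t : W) :
    (lis ω).count t % 2 = (lis ω').count t % 2 := by
  have hsign := congr_fun (congr_arg SemidirectProduct.left (congr_arg cs.signHom h)) t
  simp only [signHom_wordProd] at hsign
  rw [Int.units_pow_eq_pow_mod_two, Int.units_pow_eq_pow_mod_two (n := count t _)] at hsign
  rcases Nat.mod_two_eq_zero_or_one ((lis ω).count t) with h₁ | h₁ <;>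
    rcases Nat.mod_two_eq_zero_or_one ((lis ω').count t) with h₂ | h₂ <;>
    simp [h₁, h₂] at hsign ⊢

theorem leftInvSeq_perm_of_nodup {ω ω' : List B} (h : π ω = π ω') (hω : (lis ω).Nodup)
    (hω' : (lis ω').Nodup) : lis ω ~ lis ω' := by
  refine perm_iff_count.mpr fun t ↦ ?_
  have := cs.count_leftInvSeq_mod_two_eq h t
  have := nodup_iff_count_le_one.mp hω t
  have := nodup_iff_count_le_one.mp hω' t
  omega

end SignCocycle

theorem isReduced_of_nodup_leftInvSeq {ω : List B} (h : (lis ω).Nodup) : cs.IsReduced ω := by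
  classical
  obtain ⟨ρ, hρ, hπ⟩ := cs.exists_isReduced (π ω)
  have hlen := (cs.leftInvSeq_perm_of_nodup hπ h hρ.nodup_leftInvSeq).length_eq
  rw [length_leftInvSeq, length_leftInvSeq] at hlen
  rw [IsReduced, hπ, hρ.eq, hlen]

variable {cs} in
theorem IsReduced.leftInvSeq_perm {ω ω' : List B} (hω : cs.IsReduced ω)
    (hω' : cs.IsReduced ω') (h : π ω = π ω') : lis ω ~ lis ω' := by
  classical
  exact cs.leftInvSeq_perm_of_nodup h hω.nodup_leftInvSeq hω'.nodup_leftInvSeq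

section DeletionPair

variable {cs} {a b : B} {mid : List B} (hω : ¬ cs.IsReduced (a :: mid ++ [b]))
  (ha : cs.IsReduced (a :: mid)) (hb : cs.IsReduced (mid ++ [b]))
include hω ha hb

theorem simple_mul_wordProd_mul_simple_of_deletionPair : s a * π mid * s b = π mid := by
  classical
  have hcons : lis (a :: mid ++ [b]) = s a :: (lis (mid ++ [b])).map (MulAut.conj (s a)) := rfl
  have hconcat : lis (a :: mid ++ [b]) =
      lis (a :: mid) ++ [π (a :: mid) * s b * (π (a :: mid))⁻¹] := by
    rw [← concat_eq_append, leftInvSeq_concat, concat_eq_append]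
  have hfirst : s a = π (a :: mid) * s b * (π (a :: mid))⁻¹ :=
    eq_of_cons_eq_append_singleton_of_not_nodup (hcons.symm.trans hconcat)
      (hb.nodup_leftInvSeq.map (MulAut.conj _).injective) ha.nodup_leftInvSeq
      (hcons ▸ mt (cs.isReduced_of_nodup_leftInvSeq) hω)
  rw [wordProd_cons] at hfirst
  calc s a * π mid * s b = s a * π mid * s b * (s a * π mid)⁻¹ * (s a * π mid) := by group
    _ = π mid := by rw [← hfirst, simple_mul_simple_cancel_left]

theorem simple_conj_mem_leftInvSeq_of_deletionPair {q : W} (hq : q ∈ lis mid) :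
    s a * q * s a ∈ lis mid := by
  have hcomm := simple_mul_wordProd_mul_simple_of_deletionPair hω ha hb
  have hconcat : lis (mid ++ [b]) = lis mid ++ [s a] := by
    rw [← concat_eq_append, leftInvSeq_concat, concat_eq_append]
    congr 2
    rw [mul_inv_eq_iff_eq_mul]
    nth_rw 1 [← hcomm]
    simp [mul_assoc]
  have hperm : lis (a :: mid) ~ lis (mid ++ [b]) := by
    refine ha.leftInvSeq_perm hb ?_
    rw [wordProd_cons, wordProd_append, wordProd_singleton]
    nth_rw 2 [← hcomm]
    simp [mul_assoc]
  have hmem : s a * q * s a ∈ lis (a :: mid) :=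
    mem_cons_of_mem _ <| by
      simpa [MulAut.conj_apply] using mem_map_of_mem (f := MulAut.conj (s a)) hq
  have hnodup := hb.nodup_leftInvSeq
  rw [hconcat, nodup_append] at hnodup
  rw [hperm.mem_iff, hconcat, mem_append, mem_singleton] at hmem
  refine hmem.resolve_right fun h ↦ hnodup.2.2 _ ?_ _ (mem_singleton_self _) rfl
  rw [mul_assoc, mul_eq_left, mul_eq_one_iff_eq_inv, inv_simple] at h
  exact h ▸ hq

theorem length_wordProd_eraseIdx_lt_of_deletionPair {j : ℕ} (hj : j < mid.length) :
    ℓ (π (a :: mid.eraseIdx j ++ [b])) < mid.length := by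
  have hq : (lis mid).getD j 1 ∈ lis mid := by
    rw [getD_eq_getElem _ _ (by simpa using hj)]
    exact getElem_mem _
  have hprod : π (a :: mid.eraseIdx j ++ [b]) = s a * (lis mid).getD j 1 * s a * π mid := by
    rw [wordProd_append, wordProd_cons, ← getD_leftInvSeq_mul_wordProd, wordProd_singleton]
    nth_rw 2 [← simple_mul_wordProd_mul_simple_of_deletionPair hω ha hb]
    simp [mul_assoc]
  have hmid : cs.IsReduced mid := by simpa using hb.take mid.length
  have hinv := cs.isLeftInversion_of_mem_leftInvSeq hmid
    (simple_conj_mem_leftInvSeq_of_deletionPair hω ha hb hq)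
  rw [hprod]
  exact hinv.2.trans_le (cs.length_wordProd_le mid)

end DeletionPair

end CoxeterSystem

/-- Let the first and last letters of the word `ω` form a deletion pair:
`ω` is not reduced, but deleting either the first or the last letter yields a reduced word.
Then for any interior position `u` (so `0 < u < ω.length - 1`), the word obtained by
deleting the letter at position `u` is not reduced. -/
theorem eraseIdx_interior_not_reduced {B W : Type*} [Group W] {M : CoxeterMatrix B}
    (cs : CoxeterSystem M W) (ω : List B)
    (hnred : ¬ cs.IsReduced ω)
    (htail : cs.IsReduced ω.tail)
    (hdrop : cs.IsReduced ω.dropLast)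
    (u : ℕ) (hu0 : 0 < u) (hu1 : u + 1 < ω.length) :
    ¬ cs.IsReduced (ω.eraseIdx u) := by
  obtain ⟨a, rest, rfl⟩ := exists_cons_of_length_pos (by omega : 0 < ω.length)
  obtain ⟨mid, b, rfl⟩ := rest.eq_nil_or_concat'.resolve_left (by rintro rfl; simp at hu1)
  obtain ⟨j, rfl⟩ : ∃ j, u = j + 1 := ⟨u - 1, by omega⟩
  have hj : j < mid.length := by simpa using hu1
  rw [tail_cons] at htail
  rw [← cons_append, dropLast_concat] at hdrop
  rw [eraseIdx_cons_succ, eraseIdx_append_of_lt_length hj, ← cons_append]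
  rw [← cons_append] at hnred
  intro hred
  have hlt := CoxeterSystem.length_wordProd_eraseIdx_lt_of_deletionPair hnred hdrop htail hj
  rw [hred.eq, length_append, length_cons, length_eraseIdx_of_lt hj] at hlt
  omega
end

section
/- Let K be a finite CW complex with characteristic maps f_α : B^{dim e_α} → closure(e_α) such that (i) each f_α(B^{dim e_α}) is a union of open cells, and (ii) for each α, the preimage under f_α of the open cells of dimension dim e_α − 1 is a dense subset of the boundary sphere of B^{dim e_α}. Then the closure poset of K is graded by cell dimension: whenever an open cell e_ρ lies in the closure of e_σ with dim e_σ − dim e_ρ > 1, there exists an open cell e_τ with e_ρ < e_τ < e_σ in the closure poset. -/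
/-!
Pick a point `x` of `e_ρ`. It lies in the closure of `e_σ` but not in `e_σ`, so it is the image
of a point of the boundary sphere of the characteristic ball of `e_σ`. By condition 2 that point
is a limit of points mapped into cells of dimension `dim e_σ - 1`; as there are finitely many
cells, `x` lies in the closure of one of them, `e_τ`. Condition 1 makes the closure of every
cell a union of cells, so meeting `e_τ` (resp. `closure e_σ`) in one point upgrades to
`e_ρ ⊆ closure e_τ` (resp. `e_τ ⊆ closure e_σ`).
-/

open Metric Set

/-- A finite CW complex on a Hausdorff space `X`: finitely many disjoint open cells
`cell α` covering `X`, with characteristic maps `f α` defined (continuously) on the closed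
unit ball of a Euclidean space of the appropriate dimension, mapping the open ball
homeomorphically onto the open cell and the boundary sphere into a union of
lower-dimensional open cells. -/
structure FiniteCWComplex (X : Type) [TopologicalSpace X] [T2Space X] where
  ι : Type
  finite_ι : Finite ι
  dim : ι → ℕ
  cell : ι → Set X
  f : (α : ι) → EuclideanSpace ℝ (Fin (dim α)) → X
  f_cont : ∀ α, ContinuousOn (f α) (closedBall 0 1)
  cells_disjoint : ∀ α β, α ≠ β → Disjoint (cell α) (cell β)
  cells_cover : ⋃ α, cell α = univ
  image_interior : ∀ α, f α '' ball 0 1 = cell α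
  interior_embedding : ∀ α,
    Topology.IsEmbedding ((ball (0 : EuclideanSpace ℝ (Fin (dim α))) 1).restrict (f α))
  image_closedBall : ∀ α, f α '' closedBall 0 1 = closure (cell α)
  boundary_cells : ∀ α, ∃ s : Set ι, (∀ β ∈ s, dim β < dim α) ∧
    f α '' sphere 0 1 = ⋃ β ∈ s, cell β

variable {X : Type} [TopologicalSpace X] [T2Space X]

/-- Condition 1 of the regularity criterion: each `f α (B^{dim e_α})` is a union of open
cells. -/
def Cond1 (K : FiniteCWComplex X) : Prop :=
  ∀ α, ∃ s : Set K.ι, K.f α '' closedBall 0 1 = ⋃ β ∈ s, K.cell β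

/-- Condition 2 of the regularity criterion: for each `α`, the preimage under `f α` of the
open cells of dimension `dim e_α − 1` is dense in the boundary sphere of the ball. -/
def Cond2 (K : FiniteCWComplex X) : Prop :=
  ∀ α, sphere (0 : EuclideanSpace ℝ (Fin (K.dim α))) 1 ⊆
    closure (sphere 0 1 ∩ K.f α ⁻¹' (⋃ β ∈ {β | K.dim β + 1 = K.dim α}, K.cell β))

namespace FiniteCWComplex

variable (K : FiniteCWComplex X)

lemma cell_nonempty (α : K.ι) : (K.cell α).Nonempty :=
  K.image_interior α ▸ (nonempty_ball.mpr one_pos).image _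

lemma cell_subset_biUnion_of_mem {s : Set K.ι} {ρ : K.ι} {x : X}
    (hx : x ∈ K.cell ρ) (hxs : x ∈ ⋃ β ∈ s, K.cell β) : K.cell ρ ⊆ ⋃ β ∈ s, K.cell β := by
  obtain ⟨β, hβs, hxβ⟩ := mem_iUnion₂.mp hxs
  obtain rfl : β = ρ := by
    by_contra hne
    exact disjoint_left.mp (K.cells_disjoint β ρ hne) hxβ hx
  exact subset_biUnion_of_mem hβs

lemma cell_subset_closure_of_mem (h1 : Cond1 K) {ρ σ : K.ι} {x : X}
    (hx : x ∈ K.cell ρ) (hxσ : x ∈ closure (K.cell σ)) : K.cell ρ ⊆ closure (K.cell σ) := by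
  obtain ⟨s, hs⟩ := h1 σ
  rw [K.image_closedBall σ] at hs
  rw [hs] at hxσ ⊢
  exact K.cell_subset_biUnion_of_mem hx hxσ

lemma mem_sphere_of_f_notMem_cell {σ : K.ι} {y : EuclideanSpace ℝ (Fin (K.dim σ))}
    (hy : y ∈ closedBall 0 1) (hfy : K.f σ y ∉ K.cell σ) : y ∈ sphere 0 1 := by
  rw [← ball_union_sphere] at hy
  refine hy.resolve_left fun hyb => hfy ?_
  exact K.image_interior σ ▸ mem_image_of_mem _ hyb

lemma exists_codim_one_of_mem_closure_of_notMem (h2 : Cond2 K) {σ : K.ι} {x : X}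
    (hxσ : x ∈ closure (K.cell σ)) (hx : x ∉ K.cell σ) :
    ∃ τ, K.dim τ + 1 = K.dim σ ∧ (K.cell τ ∩ closure (K.cell σ)).Nonempty ∧
      x ∈ closure (K.cell τ) := by
  have := K.finite_ι
  rw [← K.image_closedBall σ] at hxσ
  obtain ⟨y, hy, rfl⟩ := hxσ
  set S := sphere (0 : EuclideanSpace ℝ (Fin (K.dim σ))) 1 ∩
    K.f σ ⁻¹' ⋃ β ∈ {β | K.dim β + 1 = K.dim σ}, K.cell β
  set T := {τ | K.dim τ + 1 = K.dim σ ∧ (K.cell τ ∩ closure (K.cell σ)).Nonempty}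
  have hS_closure : closure S ⊆ closedBall 0 1 :=
    closure_minimal (inter_subset_left.trans sphere_subset_closedBall) isClosed_closedBall
  have hy_closure : y ∈ closure S := h2 σ (K.mem_sphere_of_f_notMem_cell hy hx)
  have hfy : K.f σ y ∈ closure (K.f σ '' S) :=
    ((K.f_cont σ).mono hS_closure).image_closure (mem_image_of_mem _ hy_closure)
  have himage : K.f σ '' S ⊆ ⋃ τ ∈ T, K.cell τ := by
    rintro _ ⟨w, ⟨hw, hwU⟩, rfl⟩
    obtain ⟨τ, hτ, hwτ⟩ := mem_iUnion₂.mp hwU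
    have hwσ : K.f σ w ∈ closure (K.cell σ) :=
      K.image_closedBall σ ▸ mem_image_of_mem _ (sphere_subset_closedBall hw)
    exact mem_biUnion ⟨hτ, _, hwτ, hwσ⟩ hwτ
  have hfy' := (toFinite T).closure_biUnion (fun τ => K.cell τ) ▸ closure_mono himage hfy
  obtain ⟨τ, ⟨hτdim, hτσ⟩, hyτ⟩ := mem_iUnion₂.mp hfy'
  exact ⟨τ, hτdim, hτσ, hyτ⟩

end FiniteCWComplex

/-- Under conditions 1 and 2 of the regularity criterion, the closure
poset of a finite CW complex is graded by cell dimension: whenever `cell ρ` lies in the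
closure of `cell σ` and `dim σ − dim ρ > 1`, there is an intermediate cell `τ`. -/
theorem closurePoset_graded (K : FiniteCWComplex X) (h1 : Cond1 K) (h2 : Cond2 K)
    (ρ σ : K.ι) (hρσ : K.cell ρ ⊆ closure (K.cell σ)) (hdim : K.dim ρ + 1 < K.dim σ) :
    ∃ τ : K.ι, K.cell ρ ⊆ closure (K.cell τ) ∧ K.cell τ ⊆ closure (K.cell σ) ∧
      K.dim ρ < K.dim τ ∧ K.dim τ < K.dim σ := by
  obtain ⟨x, hx⟩ := K.cell_nonempty ρ
  have hρσ_ne : ρ ≠ σ := by rintro rfl; omega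
  have hxσ : x ∉ K.cell σ := disjoint_left.mp (K.cells_disjoint ρ σ hρσ_ne) hx
  obtain ⟨τ, hτdim, ⟨w, hwτ, hwσ⟩, hxτ⟩ :=
    K.exists_codim_one_of_mem_closure_of_notMem h2 (hρσ hx) hxσ
  exact ⟨τ, K.cell_subset_closure_of_mem h1 hx hxτ, K.cell_subset_closure_of_mem h1 hwτ hwσ,
    by omega, by omega⟩
end

section
/- For the braid relation in a Coxeter group with m(i,j) alternating factors, and any parameters t₂,…,t_{m(i,j)} > 0, there is a unique tuple (t₁′,…,t_{m(i,j)}′) of nonnegative reals satisfying x_i(0) x_j(t₂) x_i(t₃) ⋯ = x_j(t₁′) x_i(t₂′) x_j(t₃′) ⋯ , namely t₁′ = t₂, t₂′ = t₃, …, t_{m(i,j)−1}′ = t_{m(i,j)}, and t_{m(i,j)}′ = 0, where x_i(t) = exp(t e_i) are the Chevalley one-parameter subgroups in the unipotent radical N of a Borel subgroup of a semisimple simply connected algebraic group split over ℝ. -/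
/-!
For `j = i + 1` the generators are elementary matrices `1 + t E_{ab}`, `1 + t E_{bc}` with
`a = i`, `b = i + 1`, `c = i + 2`. Since `E_{bc} E_{ab} = 0`, the left side is
`1 + t₃ E_{ab} + t₂ E_{bc}`, while the right side is
`1 + t₂' E_{ab} + (t₁' + t₃') E_{bc} + t₂' t₃' E_{ac}`. Comparing the `(a,c)` entries gives
`t₂' t₃' = 0`, and `t₂' = t₃ > 0` forces `t₃' = 0`.
-/

/-- The Chevalley one-parameter unipotent element `x_{ij}(t) = 1 + t·E_{ij}` in the
unipotent radical of the Borel subgroup of upper triangular matrices (type A). -/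
noncomputable def chevGen (n i j : ℕ) (hi : i < n) (hj : j < n) (t : ℝ) :
    Matrix (Fin n) (Fin n) ℝ :=
  1 + Matrix.single ⟨i, hi⟩ ⟨j, hj⟩ t

namespace Matrix

variable {ι R : Type*} [DecidableEq ι]

theorem one_add_single_mul_one_add_single_of_ne [Fintype ι] [Semiring R] {a b c : ι}
    (hca : c ≠ a) (s u : R) :
    (1 + single b c s) * (1 + single a b u) = 1 + single a b u + single b c s := by
  simp only [add_mul, mul_add, one_mul, mul_one, single_mul_single_of_ne _ _ _ _ hca, add_zero]
  abel

theorem one_add_single_mul_one_add_single_mul_one_add_single [Fintype ι] [Semiring R]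
    {a b c : ι} (hca : c ≠ a) (hcb : c ≠ b) (s u v : R) :
    (1 + single b c s) * (1 + single a b u) * (1 + single b c v) =
      1 + single a b u + single b c (s + v) + single a c (u * v) := by
  rw [one_add_single_mul_one_add_single_of_ne hca]
  simp only [add_mul, mul_add, one_mul, mul_one, single_mul_single_of_ne _ _ _ _ hcb,
    single_mul_single_same, single_add, add_zero]
  abel

theorem one_add_single_add_single_eq_iff [Ring R] {a b c : ι} (hab : a ≠ b) (hbc : b ≠ c)
    (hac : a ≠ c) (u w u' w' z : R) :
    1 + single a b u + single b c w = 1 + single a b u' + single b c w' + single a c z ↔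
      u = u' ∧ w = w' ∧ z = 0 := by
  constructor
  · intro hEq
    have hab' := congrFun₂ hEq a b
    have hbc' := congrFun₂ hEq b c
    have hac' := congrFun₂ hEq a c
    simp_all [single_apply]
  · rintro ⟨rfl, rfl, rfl⟩
    simp

end Matrix

open Matrix in
/-- For the braid relation with `m(i,j) = 3` alternating factors
(simple roots `i`, `j = i+1` of a simply laced pair, realized in the unipotent radical of
a Borel subgroup via `x_i(t) = exp(t e_i) = 1 + t E_{i,i+1}`), and any parameters
`t₂, t₃ > 0`, the unique tuple `(t₁', t₂', t₃')` of nonnegative reals satisfying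
`x_i(0) x_j(t₂) x_i(t₃) = x_j(t₁') x_i(t₂') x_j(t₃')` is `(t₂, t₃, 0)`. -/
theorem chevalley_braid_unique (n i : ℕ) (h : i + 2 < n)
    (t₂ t₃ : ℝ) (ht₃ : 0 < t₃)
    (t₁' t₂' t₃' : ℝ) :
    (chevGen n i (i + 1) (by omega) (by omega) 0 *
        chevGen n (i + 1) (i + 2) (by omega) (by omega) t₂ *
        chevGen n i (i + 1) (by omega) (by omega) t₃ =
      chevGen n (i + 1) (i + 2) (by omega) (by omega) t₁' *
        chevGen n i (i + 1) (by omega) (by omega) t₂' *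
        chevGen n (i + 1) (i + 2) (by omega) (by omega) t₃') ↔
    (t₁' = t₂ ∧ t₂' = t₃ ∧ t₃' = 0) := by
  set a : Fin n := ⟨i, by omega⟩
  set b : Fin n := ⟨i + 1, by omega⟩
  set c : Fin n := ⟨i + 2, by omega⟩
  have hab : a ≠ b := by simp [a, b, Fin.ext_iff]
  have hbc : b ≠ c := by simp [b, c, Fin.ext_iff]
  have hac : a ≠ c := by simp [a, c, Fin.ext_iff]
  simp only [chevGen, single_zero, add_zero, one_mul]
  rw [one_add_single_mul_one_add_single_of_ne hac.symm,
    one_add_single_mul_one_add_single_mul_one_add_single hac.symm hbc.symm,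
    one_add_single_add_single_eq_iff hab hbc hac, mul_eq_zero]
  constructor
  · rintro ⟨rfl, rfl, h₂ | h₃⟩
    · exact absurd h₂ ht₃.ne'
    · exact ⟨by linarith, rfl, h₃⟩
  · rintro ⟨rfl, rfl, rfl⟩
    simp
end
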